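/- Suppose the abstention costs c_1,…,c_T ∈ [0,1/2] satisfy Tsybakov's condition: there are β > 0 and α ∈ [0,1) such that (1/T)·∑_{t=1}^T 1[1/2 − c_t < x] ≤ β·x^{α/(1−α)} for every x > 0. Assume log N ≤ T, and set η = (log N / T)^{(1−α)/(2−α)}. Then the exponentially weighted forecaster with abstention satisfies R_T ≤ (1 + β/8)·(log N)^{1/(2−α)}·T^{(1−α)/(2−α)}. -/

import Mathlib

noncomputable section

/-- Binary loss of expert `i` in round `t`: `1[y_{t,i} ≠ y_t]`. -/
def expertLoss {N : ℕ} (adv : ℕ → Fin N → ℝ) (y : ℕ → ℝ) (t : ℕ) (i : Fin N) : ℝ :=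
  if adv t i = y t then 0 else 1

/-- Normalized exponential weight `q_{t,i}` of expert `i` in round `t`. -/
def ewQ {N : ℕ} (η : ℝ) (adv : ℕ → Fin N → ℝ) (y : ℕ → ℝ) (t : ℕ) (i : Fin N) : ℝ :=
  Real.exp (-η * ∑ k ∈ Finset.range t, expertLoss adv y k i) /
    ∑ j, Real.exp (-η * ∑ k ∈ Finset.range t, expertLoss adv y k j)

/-- Aggregated prediction `p_t = ∑ i, q_{t,i} y_{t,i}`. -/
def aggP {N : ℕ} (η : ℝ) (adv : ℕ → Fin N → ℝ) (y : ℕ → ℝ) (t : ℕ) : ℝ :=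
  ∑ i, ewQ η adv y t i * adv t i

/-- Expected per-round loss of the exponentially weighted forecaster with abstention:
with `p* = max(p_t, 1 - p_t)`, `k* = 1[p_t ≥ 1/2]` and `α_t = 2(1 - p*)`, the expected
loss is `α_t · c_t + (1 - α_t) · 1[k* ≠ y_t]`. -/
def expAlgLoss {N : ℕ} (η : ℝ) (c : ℕ → ℝ) (adv : ℕ → Fin N → ℝ) (y : ℕ → ℝ) (t : ℕ) : ℝ :=
  let p := aggP η adv y t
  let pstar := max p (1 - p)
  let kstar : ℝ := if (1 : ℝ) / 2 ≤ p then 1 else 0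
  let α := 2 * (1 - pstar)
  α * c t + (1 - α) * (if kstar = y t then 0 else 1)

end

/-!
Write `W_t = ∑ᵢ exp (-η L_{t,i})` for the potential of the exponential weights and `m_t` for the
weight they put on the experts that are wrong in round `t`. The forecaster's expected loss is
`max (2 m_t c_t) (1 - 2 (1 - m_t) (1 - c_t))`, while the mix loss
`log (W_t / W_{t+1}) / η = -log (1 - m_t (1 - e^{-η})) / η` is convex in `m_t`, and the mix
losses telescope to at most `min_i L_{T,i} + log N / η`. When `c_t ≤ 1/2 - η`, both linear
pieces of the expected loss lie below tangents of the mix loss, so the round costs no more than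
its mix loss.
In the remaining rounds the expected loss is at most `m_t`, which by Hoeffding's lemma exceeds the
mix loss by at most `η / 8`; Tsybakov's condition bounds the number of such rounds by
`β T η^{α/(1-α)}`, and the chosen `η` balances `log N / η` against `β T η^{1/(1-α)} / 8`.
-/

open Real Finset MeasureTheory ProbabilityTheory

lemma integral_sum_smul_dirac {ι : Type*} [Fintype ι] [MeasurableSpace ι]
    [MeasurableSingletonClass ι] {q : ι → ℝ} (hq : ∀ i, 0 ≤ q i) (f : ι → ℝ) :
    ∫ i, f i ∂(∑ j, ENNReal.ofReal (q j) • Measure.dirac j) = ∑ j, q j * f j := by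
  rw [integral_finsetSum_measure fun j _ ↦
    (integrable_dirac enorm_lt_top).smul_measure ENNReal.ofReal_ne_top]
  refine Finset.sum_congr rfl fun j _ ↦ ?_
  rw [integral_smul_measure, integral_dirac, ENNReal.toReal_ofReal (hq j), smul_eq_mul]

-- Hoeffding's lemma for a distribution `q` on a finite type.
theorem log_sum_mul_exp_le {ι : Type*} [Fintype ι] {q ℓ : ι → ℝ} (hq : ∀ i, 0 ≤ q i)
    (hq1 : ∑ i, q i = 1) {a b : ℝ} (hℓ : ∀ i, ℓ i ∈ Set.Icc a b) (t : ℝ) :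
    log (∑ i, q i * exp (t * ℓ i)) ≤ t * ∑ i, q i * ℓ i + (b - a) ^ 2 * t ^ 2 / 8 := by
  let _ : MeasurableSpace ι := ⊤
  set μ : Measure ι := ∑ j, ENNReal.ofReal (q j) • Measure.dirac j
  have hint : ∀ f : ι → ℝ, ∫ i, f i ∂μ = ∑ j, q j * f j := integral_sum_smul_dirac hq
  have : IsProbabilityMeasure μ := ⟨by
    simp only [μ, Measure.coe_finsetSum, Finset.sum_apply, Measure.smul_apply,
      measure_univ, smul_eq_mul, mul_one]
    rw [← ENNReal.ofReal_sum_of_nonneg fun j _ ↦ hq j, hq1, ENNReal.ofReal_one]⟩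
  have hmgf := (hasSubgaussianMGF_of_mem_Icc (μ := μ) (X := ℓ) (by fun_prop)
    (Filter.Eventually.of_forall hℓ)).mgf_le t
  rw [mgf, hint, hint] at hmgf
  set m := ∑ i, q i * ℓ i
  have hfactor : ∑ i, q i * exp (t * ℓ i) = exp (t * m) * ∑ i, q i * exp (t * (ℓ i - m)) := by
    rw [Finset.mul_sum]
    refine Finset.sum_congr rfl fun i _ ↦ ?_
    rw [mul_left_comm, ← exp_add]
    ring_nf
  have hpos : 0 < ∑ i, q i * exp (t * (ℓ i - m)) := by
    obtain ⟨i, -, hi⟩ := Finset.exists_ne_zero_of_sum_ne_zero (hq1.trans_ne one_ne_zero)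
    exact Finset.sum_pos' (fun j _ ↦ by have := hq j; positivity)
      ⟨i, Finset.mem_univ i, mul_pos ((hq i).lt_of_ne' hi) (exp_pos _)⟩
  rw [hfactor, log_mul (exp_pos _).ne' hpos.ne', log_exp]
  have hcgf := (log_le_log hpos hmgf).trans_eq (log_exp _)
  have hvar : (((‖b - a‖₊ / 2) ^ 2 : NNReal) : ℝ) = (b - a) ^ 2 / 4 := by
    push_cast
    rw [Real.norm_eq_abs, div_pow, sq_abs]
    norm_num
  rw [hvar] at hcgf
  linarith

def abstentionLoss (c m : ℝ) : ℝ := max (2 * m * c) (1 - 2 * (1 - m) * (1 - c))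

lemma abstentionLoss_of_le_half {c m : ℝ} (hm : m ≤ 1 / 2) (hc : c ≤ 1 / 2) :
    abstentionLoss c m = 2 * m * c :=
  max_eq_left (by nlinarith)

lemma abstentionLoss_of_half_le {c m : ℝ} (hm : 1 / 2 ≤ m) (hc : c ≤ 1 / 2) :
    abstentionLoss c m = 1 - 2 * (1 - m) * (1 - c) :=
  max_eq_right (by nlinarith)

lemma abstentionLoss_le_self {c m : ℝ} (hc : c ∈ Set.Icc (0 : ℝ) (1 / 2))
    (hm : m ∈ Set.Icc (0 : ℝ) 1) : abstentionLoss c m ≤ m :=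
  max_le (by nlinarith [hc.1, hc.2, hm.1]) (by nlinarith [hc.1, hc.2, hm.2])

lemma one_sub_mul_one_sub_exp_neg_pos {η m : ℝ} (hη : 0 ≤ η) (hm : m ∈ Set.Icc (0 : ℝ) 1) :
    0 < 1 - m * (1 - exp (-η)) := by
  have := exp_le_one_iff.2 (neg_nonpos.2 hη)
  nlinarith [hm.1, hm.2, exp_pos (-η)]

lemma log_one_sub_mul_one_sub_exp_neg_le {η m : ℝ} (hη : 0 ≤ η) (hm : m ∈ Set.Icc (0 : ℝ) 1) :
    log (1 - m * (1 - exp (-η))) ≤ -η + (1 - m) * (exp η - 1) := by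
  have hfactor : 1 - m * (1 - exp (-η)) = exp (-η) * (1 + (1 - m) * (exp η - 1)) := by
    have hinv : exp (-η) * exp η = 1 := by rw [← exp_add, neg_add_cancel, exp_zero]
    linear_combination (m - 1) * hinv
  have hpos : 0 < 1 + (1 - m) * (exp η - 1) := by
    nlinarith [hm.2, one_le_exp hη]
  rw [hfactor, log_mul (exp_pos _).ne' hpos.ne', log_exp]
  linarith [log_le_sub_one_of_pos hpos]

lemma abstentionLoss_le_neg_log_div {η c m : ℝ} (hη0 : 0 < η) (hη1 : η ≤ 1)
    (hc : c ≤ 1 / 2 - η) (hm : m ∈ Set.Icc (0 : ℝ) 1) :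
    abstentionLoss c m ≤ -log (1 - m * (1 - exp (-η))) / η := by
  have habs : |η| ≤ 1 := by rwa [abs_of_pos hη0]
  have hexp := (abs_le.1 (abs_exp_sub_one_sub_id_le habs)).2
  have hexp_neg := (abs_le.1 (abs_exp_sub_one_sub_id_le (x := -η) (by rwa [abs_neg]))).2
  have hpos := one_sub_mul_one_sub_exp_neg_pos hη0.le hm
  rw [le_div_iff₀ hη0, abstentionLoss, max_mul_of_nonneg _ _ hη0.le]
  refine max_le ?_ ?_
  -- The two branches of the max lie below the tangents of the convex function
  -- `m ↦ -log (1 - m * (1 - exp (-η))) / η` at `m = 0` and at `m = 1`.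
  · have hslope : 2 * c * η ≤ 1 - exp (-η) := by nlinarith
    nlinarith [log_le_sub_one_of_pos hpos, mul_le_mul_of_nonneg_left hslope hm.1]
  · have hslope : exp η - 1 ≤ 2 * (1 - c) * η := by nlinarith
    nlinarith [log_one_sub_mul_one_sub_exp_neg_le hη0.le hm,
      mul_le_mul_of_nonneg_left hslope (sub_nonneg.2 hm.2)]

lemma mul_div_rpow_eq {A T : ℝ} (hA : 0 ≤ A) (hT : 0 < T) (s : ℝ) :
    T * (A / T) ^ s = A ^ s * T ^ (1 - s) := by
  rw [div_rpow hA hT.le, rpow_sub hT, rpow_one]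
  field_simp

lemma div_add_tsybakov_term_eq {A T α β η : ℝ} (hA : 0 < A) (hT : 0 < T) (hα : α < 1)
    (hη : η = (A / T) ^ ((1 - α) / (2 - α))) :
    A / η + η / 8 * (T * (β * η ^ (α / (1 - α)))) =
      (1 + β / 8) * A ^ ((1 : ℝ) / (2 - α)) * T ^ ((1 - α) / (2 - α)) := by
  have h1α : 1 - α ≠ 0 := by linarith
  have h2α : 2 - α ≠ 0 := by linarith
  set s := (1 : ℝ) / (2 - α) with hs
  have hexp : (1 - α) / (2 - α) = 1 - s := by rw [hs]; field_simp; ring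
  rw [hexp] at hη ⊢
  have hη0 : 0 < η := hη ▸ rpow_pos_of_pos (div_pos hA hT) _
  have hpow : η * η ^ (α / (1 - α)) = (A / T) ^ s := by
    have hone : 1 + α / (1 - α) = 1 / (1 - α) := by field_simp; ring
    rw [← rpow_one_add' hη0.le (by rw [hone]; exact one_div_ne_zero h1α), hη,
      ← rpow_mul (div_pos hA hT).le, hone, hs]
    congr 1
    field_simp
    ring
  have hfirst : A / η = A ^ s * T ^ (1 - s) := by
    rw [hη, ← inv_div T A, inv_rpow (div_pos hT hA).le, div_inv_eq_mul,
      mul_div_rpow_eq hT.le hA, sub_sub_cancel, mul_comm]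
  calc _ = A / η + β / 8 * (T * (η * η ^ (α / (1 - α)))) := by ring
    _ = _ := by rw [hpow, hfirst, mul_div_rpow_eq hA.le hT]; ring

noncomputable section

def cumExpertLoss {N : ℕ} (adv : ℕ → Fin N → ℝ) (y : ℕ → ℝ) (t : ℕ) (i : Fin N) : ℝ :=
  ∑ k ∈ range t, expertLoss adv y k i

def ewPotential {N : ℕ} (η : ℝ) (adv : ℕ → Fin N → ℝ) (y : ℕ → ℝ) (t : ℕ) : ℝ :=
  ∑ j, exp (-η * cumExpertLoss adv y t j)

def ewMeanLoss {N : ℕ} (η : ℝ) (adv : ℕ → Fin N → ℝ) (y : ℕ → ℝ) (t : ℕ) : ℝ :=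
  ∑ i, ewQ η adv y t i * expertLoss adv y t i

end

section Forecaster

variable {N : ℕ} (η : ℝ) (adv : ℕ → Fin N → ℝ) (y : ℕ → ℝ)

lemma expertLoss_eq_zero_or_one (t : ℕ) (i : Fin N) :
    expertLoss adv y t i = 0 ∨ expertLoss adv y t i = 1 := by
  unfold expertLoss; split_ifs <;> simp

lemma expertLoss_mem_Icc (t : ℕ) (i : Fin N) : expertLoss adv y t i ∈ Set.Icc (0 : ℝ) 1 := by
  rcases expertLoss_eq_zero_or_one adv y t i with h | h <;> simp [h]

lemma ewPotential_pos [NeZero N] (t : ℕ) : 0 < ewPotential η adv y t :=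
  Finset.sum_pos (fun _ _ ↦ exp_pos _) univ_nonempty

lemma ewPotential_zero : ewPotential η adv y 0 = N := by
  simp [ewPotential, cumExpertLoss]

lemma ewQ_eq (t : ℕ) (i : Fin N) :
    ewQ η adv y t i = exp (-η * cumExpertLoss adv y t i) / ewPotential η adv y t := rfl

lemma ewQ_nonneg (t : ℕ) (i : Fin N) : 0 ≤ ewQ η adv y t i :=
  div_nonneg (exp_pos _).le (Finset.sum_nonneg fun _ _ ↦ (exp_pos _).le)

lemma sum_ewQ [NeZero N] (t : ℕ) : ∑ i, ewQ η adv y t i = 1 := by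
  simp_rw [ewQ_eq, ← Finset.sum_div]
  exact div_self (ewPotential_pos η adv y t).ne'

lemma ewPotential_succ [NeZero N] (t : ℕ) :
    ewPotential η adv y (t + 1) =
      ewPotential η adv y t * ∑ i, ewQ η adv y t i * exp (-η * expertLoss adv y t i) := by
  have hW := (ewPotential_pos η adv y t).ne'
  simp_rw [ewQ_eq, Finset.mul_sum, ← mul_assoc, mul_div_cancel₀ _ hW, ← exp_add, ewPotential,
    cumExpertLoss, Finset.sum_range_succ, mul_add]

lemma sum_ewQ_mul_exp_eq [NeZero N] (t : ℕ) :
    ∑ i, ewQ η adv y t i * exp (-η * expertLoss adv y t i) =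
      1 - ewMeanLoss η adv y t * (1 - exp (-η)) := by
  have hbinary (i : Fin N) :
      exp (-η * expertLoss adv y t i) = 1 - expertLoss adv y t i * (1 - exp (-η)) := by
    rcases expertLoss_eq_zero_or_one adv y t i with h | h <;> simp [h]
  simp_rw [hbinary, mul_sub, mul_one, Finset.sum_sub_distrib, sum_ewQ, ewMeanLoss, Finset.sum_mul,
    mul_assoc]

lemma log_ewPotential_ge [NeZero N] (t : ℕ) (i : Fin N) :
    -η * cumExpertLoss adv y t i ≤ log (ewPotential η adv y t) := by
  rw [← log_exp (-η * _)]
  exact log_le_log (exp_pos _) <| Finset.single_le_sum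
    (f := fun j ↦ exp (-η * cumExpertLoss adv y t j)) (fun j _ ↦ (exp_pos _).le) (mem_univ i)

lemma ewMeanLoss_eq_aggP (hadv : ∀ t i, adv t i = 0 ∨ adv t i = 1) {t : ℕ} (hy : y t = 0) :
    ewMeanLoss η adv y t = aggP η adv y t :=
  Finset.sum_congr rfl fun i _ ↦ by rcases hadv t i with h | h <;> simp [expertLoss, h, hy]

lemma ewMeanLoss_eq_one_sub_aggP [NeZero N] (hadv : ∀ t i, adv t i = 0 ∨ adv t i = 1) {t : ℕ}
    (hy : y t = 1) : ewMeanLoss η adv y t = 1 - aggP η adv y t := by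
  rw [aggP, ← sum_ewQ η adv y t, ← Finset.sum_sub_distrib]
  exact Finset.sum_congr rfl fun i _ ↦ by rcases hadv t i with h | h <;> simp [expertLoss, h, hy]

lemma expAlgLoss_eq_abstentionLoss [NeZero N] (c : ℕ → ℝ) (hc : ∀ t, c t ≤ 1 / 2)
    (hadv : ∀ t i, adv t i = 0 ∨ adv t i = 1) (hy : ∀ t, y t = 0 ∨ y t = 1) (t : ℕ) :
    expAlgLoss η c adv y t = abstentionLoss (c t) (ewMeanLoss η adv y t) := by
  simp only [expAlgLoss]
  set p := aggP η adv y t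
  rcases hy t with hy | hy
  · rw [ewMeanLoss_eq_aggP η adv y hadv hy, hy]
    rcases le_or_gt (1 / 2) p with hp | hp
    · rw [max_eq_left (by linarith), if_pos hp, if_neg one_ne_zero,
        abstentionLoss_of_half_le hp (hc t)]
      ring
    · rw [max_eq_right (by linarith), if_neg hp.not_ge, if_pos rfl,
        abstentionLoss_of_le_half hp.le (hc t)]
      ring
  · rw [ewMeanLoss_eq_one_sub_aggP η adv y hadv hy, hy]
    rcases le_or_gt (1 / 2) p with hp | hp
    · rw [max_eq_left (by linarith), if_pos hp, if_pos rfl,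
        abstentionLoss_of_le_half (by linarith) (hc t)]
      ring
    · rw [max_eq_right (by linarith), if_neg hp.not_ge, if_neg zero_ne_one,
        abstentionLoss_of_half_le (by linarith) (hc t)]
      ring

lemma ewMeanLoss_mem_Icc [NeZero N] (t : ℕ) : ewMeanLoss η adv y t ∈ Set.Icc (0 : ℝ) 1 := by
  refine ⟨Finset.sum_nonneg fun i _ ↦ mul_nonneg (ewQ_nonneg η adv y t i)
    (expertLoss_mem_Icc adv y t i).1, ?_⟩
  calc ewMeanLoss η adv y t ≤ ∑ i, ewQ η adv y t i :=
        Finset.sum_le_sum fun i _ ↦ mul_le_of_le_one_right (ewQ_nonneg η adv y t i)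
          (expertLoss_mem_Icc adv y t i).2
    _ = 1 := sum_ewQ η adv y t

lemma expAlgLoss_le_log_ewPotential_sub [NeZero N] (hη0 : 0 < η) (hη1 : η ≤ 1) (c : ℕ → ℝ)
    (hc : ∀ t, c t ∈ Set.Icc (0 : ℝ) (1 / 2)) (hadv : ∀ t i, adv t i = 0 ∨ adv t i = 1)
    (hy : ∀ t, y t = 0 ∨ y t = 1) (t : ℕ) :
    expAlgLoss η c adv y t ≤
      (log (ewPotential η adv y t) - log (ewPotential η adv y (t + 1))) / η +
        η / 8 * (if 1 / 2 - c t < η then 1 else 0) := by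
  have hm := ewMeanLoss_mem_Icc η adv y t
  have hratio := sum_ewQ_mul_exp_eq η adv y t
  have hdrop : log (ewPotential η adv y t) - log (ewPotential η adv y (t + 1)) =
      -log (1 - ewMeanLoss η adv y t * (1 - exp (-η))) := by
    rw [ewPotential_succ, hratio, log_mul (ewPotential_pos η adv y t).ne'
      (one_sub_mul_one_sub_exp_neg_pos hη0.le hm).ne']
    ring
  rw [expAlgLoss_eq_abstentionLoss η adv y c (fun t ↦ (hc t).2) hadv hy, hdrop]
  split_ifs with hbad
  · have hoeffding : log (1 - ewMeanLoss η adv y t * (1 - exp (-η))) ≤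
        -η * ewMeanLoss η adv y t + η ^ 2 / 8 := by
      have h := log_sum_mul_exp_le (ewQ_nonneg η adv y t) (sum_ewQ η adv y t)
        (expertLoss_mem_Icc adv y t) (-η)
      rwa [hratio, ← ewMeanLoss, sub_zero, one_pow, one_mul, neg_sq] at h
    have := abstentionLoss_le_self (hc t) hm
    rw [div_add' _ _ _ hη0.ne', le_div_iff₀ hη0]
    nlinarith
  · rw [mul_zero, add_zero]
    exact abstentionLoss_le_neg_log_div hη0 hη1 (by linarith) hm

theorem ewAbstention_regret_le [NeZero N] (hη0 : 0 < η) (hη1 : η ≤ 1) (c : ℕ → ℝ)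
    (hc : ∀ t, c t ∈ Set.Icc (0 : ℝ) (1 / 2)) (hadv : ∀ t i, adv t i = 0 ∨ adv t i = 1)
    (hy : ∀ t, y t = 0 ∨ y t = 1) (T : ℕ) :
    ∑ t ∈ range T, expAlgLoss η c adv y t - ⨅ i, cumExpertLoss adv y T i ≤
      log N / η + η / 8 * ∑ t ∈ range T, (if 1 / 2 - c t < η then (1 : ℝ) else 0) := by
  have hsum : ∑ t ∈ range T, expAlgLoss η c adv y t ≤
      (log N - log (ewPotential η adv y T)) / η +
        η / 8 * ∑ t ∈ range T, (if 1 / 2 - c t < η then (1 : ℝ) else 0) := by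
    calc ∑ t ∈ range T, expAlgLoss η c adv y t
        ≤ ∑ t ∈ range T, ((log (ewPotential η adv y t) - log (ewPotential η adv y (t + 1))) / η +
            η / 8 * (if 1 / 2 - c t < η then (1 : ℝ) else 0)) :=
          Finset.sum_le_sum fun t _ ↦
            expAlgLoss_le_log_ewPotential_sub η adv y hη0 hη1 c hc hadv hy t
      _ = _ := by
          rw [Finset.sum_add_distrib, ← Finset.sum_div, ← Finset.mul_sum,
            Finset.sum_range_sub' (fun t ↦ log (ewPotential η adv y t)), ewPotential_zero]
  have hbest : -log (ewPotential η adv y T) / η ≤ ⨅ i, cumExpertLoss adv y T i :=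
    le_ciInf fun i ↦ by
      rw [div_le_iff₀ hη0]
      linarith [log_ewPotential_ge η adv y T i]
  have hsplit : (log N - log (ewPotential η adv y T)) / η =
      log N / η + -log (ewPotential η adv y T) / η := by ring
  linarith

end Forecaster

theorem abstention_tsybakov_rate_general (N T : ℕ) (hN : 2 ≤ N) (hT : 1 ≤ T) (c : ℕ → ℝ)
    (hc : ∀ t, c t ∈ Set.Icc (0 : ℝ) (1 / 2)) (β α : ℝ)
    (hα1 : α < 1)
    (hTsy : ∀ x : ℝ, 0 < x →
      (1 / T) * ∑ t ∈ Finset.range T, (if 1 / 2 - c t < x then (1 : ℝ) else 0)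
        ≤ β * x ^ (α / (1 - α)))
    (hlogN : Real.log N ≤ T)
    (adv : ℕ → Fin N → ℝ) (y : ℕ → ℝ)
    (hadv : ∀ t i, adv t i = 0 ∨ adv t i = 1) (hy : ∀ t, y t = 0 ∨ y t = 1) :
    (∑ t ∈ Finset.range T,
        expAlgLoss ((Real.log N / T) ^ ((1 - α) / (2 - α))) c adv y t)
        - ⨅ i : Fin N, ∑ t ∈ Finset.range T, expertLoss adv y t i
      ≤ (1 + β / 8) * Real.log N ^ ((1 : ℝ) / (2 - α)) * (T : ℝ) ^ ((1 - α) / (2 - α)) := by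
  have : NeZero N := ⟨by omega⟩
  have hT0 : (0 : ℝ) < T := by exact_mod_cast hT
  have hA : 0 < Real.log N := Real.log_pos (by exact_mod_cast hN)
  set η := (Real.log N / T) ^ ((1 - α) / (2 - α)) with hη
  have hη0 : 0 < η := rpow_pos_of_pos (div_pos hA hT0) _
  have hη1 : η ≤ 1 := rpow_le_one (div_pos hA hT0).le ((div_le_one hT0).2 hlogN)
    (div_nonneg (by linarith) (by linarith))
  have hbad : ∑ t ∈ range T, (if 1 / 2 - c t < η then (1 : ℝ) else 0) ≤
      T * (β * η ^ (α / (1 - α))) := by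
    have := mul_le_mul_of_nonneg_left (hTsy η hη0) hT0.le
    rwa [← mul_assoc, mul_one_div_cancel hT0.ne', one_mul] at this
  calc _ ≤ Real.log N / η + η / 8 * (T * (β * η ^ (α / (1 - α)))) :=
        (ewAbstention_regret_le η adv y hη0 hη1 c hc hadv hy T).trans (by gcongr)
    _ = _ := div_add_tsybakov_term_eq hA hT0 hα1 hη

/-- Corollary 6: intermediate rates under Tsybakov's condition on the abstention costs.
With `η = (log N / T)^{(1-α)/(2-α)}`, the regret is at most
`(1 + β/8)·(log N)^{1/(2-α)}·T^{(1-α)/(2-α)}`. -/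
theorem abstention_tsybakov_rate (N T : ℕ) (hN : 2 ≤ N) (hT : 1 ≤ T) (c : ℕ → ℝ)
    (hc : ∀ t, c t ∈ Set.Icc (0 : ℝ) (1 / 2)) (β α : ℝ) (hβ : 0 < β)
    (hα0 : 0 ≤ α) (hα1 : α < 1)
    (hTsy : ∀ x : ℝ, 0 < x →
      (1 / T) * ∑ t ∈ Finset.range T, (if 1 / 2 - c t < x then (1 : ℝ) else 0)
        ≤ β * x ^ (α / (1 - α)))
    (hlogN : Real.log N ≤ T)
    (adv : ℕ → Fin N → ℝ) (y : ℕ → ℝ)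
    (hadv : ∀ t i, adv t i = 0 ∨ adv t i = 1) (hy : ∀ t, y t = 0 ∨ y t = 1) :
    (∑ t ∈ Finset.range T,
        expAlgLoss ((Real.log N / T) ^ ((1 - α) / (2 - α))) c adv y t)
        - ⨅ i : Fin N, ∑ t ∈ Finset.range T, expertLoss adv y t i
      ≤ (1 + β / 8) * Real.log N ^ ((1 : ℝ) / (2 - α)) * (T : ℝ) ^ ((1 - α) / (2 - α)) :=
  abstention_tsybakov_rate_general N T hN hT c hc β α hα1 hTsy hlogN adv y hadv hy
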